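/- Let n and r be integers with 2 < r < n. If g ∈ GL_n(ℂ) satisfies e_r(g·x) = e_r(x) for all x ∈ ℂⁿ, then g is a monomial matrix: g is the product of a permutation matrix and an invertible diagonal matrix, i.e., every column of g has exactly one nonzero entry. -/

import Mathlib

/-!
Fix a column `a = g eⱼ`. Every `v` is `g y` for some `y`, so invariance gives
`e_r(v + t a) = e_r(y + t eⱼ)`, which is affine in `t`. Hence the `t²`-coefficient of
`e_r(v + t a)`, namely `∑_{|J| = 2} a_J e_{r-2}(v|_{Jᶜ})`, vanishes for every `v`.
Testing `v = 𝟙` and `v = 𝟙 - e_p` gives two linear relations between `e₂(a|_{pᶜ})` and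
`a_p ∑_{i ≠ p} aᵢ` with determinant `± C(n-3, r-3) ≠ 0` (this is where `r > 2` enters).
So `a_p (∑ aᵢ - a_p) = 0`: every nonzero entry of a column equals the column sum, hence there
is exactly one, and invertibility makes their positions a permutation.
-/

/-- The `r`-th elementary symmetric polynomial in `n` variables, evaluated at `x : Fin n → ℂ`. -/
noncomputable def esymm (n r : ℕ) (x : Fin n → ℂ) : ℂ :=
  ∑ I ∈ Finset.powersetCard r Finset.univ, ∏ i ∈ I, x i

open Finset Polynomial
open scoped Matrix

section Combinatorics

variable {ι : Type*} [DecidableEq ι] {M : Type*} [AddCommMonoid M]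

theorem sum_powersetCard_sum_powersetCard_sdiff (s : Finset ι) {k r : ℕ} (hkr : k ≤ r)
    (f : Finset ι → Finset ι → M) :
    ∑ I ∈ powersetCard r s, ∑ J ∈ powersetCard k I, f J (I \ J) =
      ∑ J ∈ powersetCard k s, ∑ L ∈ powersetCard (r - k) (s \ J), f J L := by
  rw [sum_comm' (t' := powersetCard k s) (s' := fun J => (powersetCard r s).filter (J ⊆ ·))
    (fun I J => by simp only [mem_powersetCard, mem_filter]; grind)]
  refine sum_congr rfl fun J hJ => ?_
  obtain ⟨hJs, hJk⟩ := mem_powersetCard.mp hJ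
  have hdisj : ∀ L ∈ powersetCard (r - k) (s \ J), Disjoint L J := fun L hL =>
    disjoint_of_subset_left (mem_powersetCard.mp hL).1 sdiff_disjoint
  rw [filter_powersetCard_subset J s r hJs (hJk ▸ hkr), hJk, sum_image]
  · exact sum_congr rfl fun L hL => by rw [union_sdiff_cancel_right (hdisj L hL)]
  · intro L hL L' hL' h
    simpa [union_sdiff_cancel_right, hdisj L hL, hdisj L' hL'] using congrArg (· \ J) h

theorem sum_powersetCard_two_insert {p : ι} {s : Finset ι} (hp : p ∉ s) (f : Finset ι → M) :
    ∑ J ∈ powersetCard 2 (insert p s), f J = ∑ J ∈ powersetCard 2 s, f J + ∑ i ∈ s, f {p, i} := by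
  rw [powersetCard_succ_insert hp, powersetCard_one, sum_union, sum_image, sum_map]
  · rfl
  · simp only [coe_map, Function.Embedding.coeFn_mk]
    rintro _ ⟨i, hi, rfl⟩ _ ⟨j, hj, rfl⟩ h
    have hi' : i ∈ insert p {j} := h ▸ mem_insert_of_mem (mem_singleton_self i)
    grind
  · simp only [disjoint_left, mem_powersetCard, mem_image, mem_map]
    grind

theorem sum_powersetCard_prod_ite_mem {R : Type*} [CommSemiring R] (t u : Finset ι) (m : ℕ) :
    ∑ L ∈ powersetCard m t, ∏ i ∈ L, (if i ∈ u then (1 : R) else 0) = (#(t ∩ u)).choose m := by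
  simp_rw [prod_boole, sum_boole]
  rw [← card_powersetCard]
  congr 2
  ext L
  simp only [mem_filter, mem_powersetCard, subset_inter_iff]
  tauto

end Combinatorics

section EsymmLine

variable {ι : Type*} [DecidableEq ι] {R : Type*} [CommRing R]

noncomputable def esymmLine (s : Finset ι) (r : ℕ) (u w : ι → R) : R[X] :=
  ∑ I ∈ powersetCard r s, ∏ i ∈ I, (C (w i) * X + C (u i))

theorem coeff_esymmLine (s : Finset ι) (u w : ι → R) {k r : ℕ} (hkr : k ≤ r) :
    (esymmLine s r u w).coeff k =
      ∑ J ∈ powersetCard k s,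
        (∏ i ∈ J, w i) * ∑ L ∈ powersetCard (r - k) (s \ J), ∏ i ∈ L, u i := by
  have hprod : ∀ I : Finset ι, ∏ i ∈ I, (C (w i) * X + C (u i)) =
      ∑ J ∈ I.powerset, C ((∏ i ∈ J, w i) * ∏ i ∈ I \ J, u i) * X ^ #J := by
    intro I
    rw [prod_add]
    refine sum_congr rfl fun J _ => ?_
    simp only [prod_mul_distrib, prod_const, map_mul, map_prod]
    ring
  simp_rw [esymmLine, finsetSum_coeff, hprod, finsetSum_coeff, coeff_C_mul_X_pow, mul_sum]
  rw [← sum_powersetCard_sum_powersetCard_sdiff s hkr (fun J L => (∏ i ∈ J, w i) * ∏ i ∈ L, u i)]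
  refine sum_congr rfl fun I _ => ?_
  rw [← sum_filter, powersetCard_eq_filter]
  exact sum_congr (filter_congr fun J _ => eq_comm) fun _ _ => rfl

theorem coeff_esymmLine_single_two (s : Finset ι) {r : ℕ} (hr : 2 ≤ r) (u : ι → R) (j : ι)
    (c : R) : (esymmLine s r u (Pi.single j c)).coeff 2 = 0 := by
  rw [coeff_esymmLine s u _ hr]
  refine sum_eq_zero fun J hJ => ?_
  obtain ⟨i, hiJ, hij⟩ := exists_mem_ne (by rw [(mem_powersetCard.mp hJ).2]; norm_num) j
  rw [prod_eq_zero hiJ (by simp [hij]), zero_mul]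

theorem coeff_esymmLine_indicator_two (t u : Finset ι) (a : ι → R) {r : ℕ} (hr : 2 ≤ r) :
    (esymmLine t r (fun i => if i ∈ u then 1 else 0) a).coeff 2 =
      ∑ J ∈ powersetCard 2 t, (∏ i ∈ J, a i) * (#((t \ J) ∩ u)).choose (r - 2) := by
  simp_rw [coeff_esymmLine t _ a hr, sum_powersetCard_prod_ite_mem]

section InsertPoint

variable {p : ι} {s : Finset ι} (hps : p ∉ s) (a : ι → R) {r : ℕ} (hr : 2 ≤ r)
include hps hr

theorem coeff_esymmLine_indicator_insert_two :
    (esymmLine (insert p s) r (fun i => if i ∈ insert p s then 1 else 0) a).coeff 2 =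
      (#s - 1).choose (r - 2) * (∑ J ∈ powersetCard 2 s, ∏ i ∈ J, a i + a p * ∑ i ∈ s, a i) := by
  have hcard : ∀ J ∈ powersetCard 2 (insert p s), #((insert p s \ J) ∩ insert p s) = #s - 1 := by
    intro J hJ
    obtain ⟨hJt, hJ2⟩ := mem_powersetCard.mp hJ
    rw [inter_eq_left.mpr sdiff_subset, card_sdiff_of_subset hJt, hJ2, card_insert_of_notMem hps]
    omega
  rw [coeff_esymmLine_indicator_two _ _ a hr, sum_congr rfl fun J hJ => by rw [hcard J hJ],
    ← sum_mul, sum_powersetCard_two_insert hps,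
    sum_congr rfl fun i hi => prod_pair (ne_of_mem_of_not_mem hi hps).symm, ← mul_sum, mul_comm]

theorem coeff_esymmLine_indicator_erase_two :
    (esymmLine (insert p s) r (fun i => if i ∈ s then 1 else 0) a).coeff 2 =
      (#s - 2).choose (r - 2) * ∑ J ∈ powersetCard 2 s, ∏ i ∈ J, a i +
        (#s - 1).choose (r - 2) * (a p * ∑ i ∈ s, a i) := by
  have hcard_s : ∀ J ∈ powersetCard 2 s, #((insert p s \ J) ∩ s) = #s - 2 := by
    intro J hJ
    have : (insert p s \ J) ∩ s = s \ J := by ext; simp; grind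
    rw [this, card_sdiff_of_subset (mem_powersetCard.mp hJ).1, (mem_powersetCard.mp hJ).2]
  have hcard_p : ∀ i ∈ s, #((insert p s \ {p, i}) ∩ s) = #s - 1 := by
    intro i hi
    have : (insert p s \ {p, i}) ∩ s = s.erase i := by ext; simp; grind
    rw [this, card_erase_of_mem hi]
  rw [coeff_esymmLine_indicator_two _ _ a hr, sum_powersetCard_two_insert hps,
    sum_congr rfl fun J hJ => by rw [hcard_s J hJ],
    sum_congr (s₁ := s) rfl fun i hi => by
      rw [hcard_p i hi, prod_pair (ne_of_mem_of_not_mem hi hps).symm],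
    ← sum_mul, ← sum_mul, ← mul_sum]
  ring

end InsertPoint

theorem eq_zero_or_eq_sum_of_forall_coeff_esymmLine_two_eq_zero {K : Type*} [Field K]
    [CharZero K] {t : Finset ι} {a : ι → K} {r : ℕ} (hr : 2 < r) (hrt : r ≤ #t)
    (h : ∀ v, (esymmLine t r v a).coeff 2 = 0) {p : ι} (hp : p ∈ t) :
    a p = 0 ∨ a p = ∑ i ∈ t, a i := by
  obtain ⟨s, hps, rfl⟩ : ∃ s, p ∉ s ∧ t = insert p s :=
    ⟨t.erase p, notMem_erase p t, (insert_erase hp).symm⟩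
  have h_all := coeff_esymmLine_indicator_insert_two hps a hr.le ▸ h _
  have h_erase := coeff_esymmLine_indicator_erase_two hps a hr.le ▸ h _
  rw [card_insert_of_notMem hps] at hrt
  obtain ⟨k, m, hk, hm₂, hm₁, hkm⟩ : ∃ k m, r - 2 = k + 1 ∧ #s - 2 = m ∧ #s - 1 = m + 1 ∧ k ≤ m :=
    ⟨r - 3, #s - 2, by omega, rfl, by omega, by omega⟩
  rw [hk, hm₁] at h_all
  rw [hk, hm₁, hm₂] at h_erase
  rw [sum_insert hps, left_eq_add]
  set B := ∑ J ∈ powersetCard 2 s, ∏ i ∈ J, a i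
  set S := ∑ i ∈ s, a i
  have hB : B = 0 := by
    have hpascal : ((m + 1).choose (k + 1) : K) = m.choose k + m.choose (k + 1) := by
      exact_mod_cast Nat.choose_succ_succ m k
    have hmk : (m.choose k : K) ≠ 0 := Nat.cast_ne_zero.mpr (Nat.choose_pos hkm).ne'
    refine (mul_eq_zero.mp (?_ : (m.choose k : K) * B = 0)).resolve_left hmk
    linear_combination h_all - h_erase - B * hpascal
  have hpS : a p * S = 0 := by
    have hmk : ((m + 1).choose (k + 1) : K) ≠ 0 :=
      Nat.cast_ne_zero.mpr (Nat.choose_pos (by omega)).ne'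
    simpa [hB, hmk] using h_all
  exact mul_eq_zero.mp hpS

end EsymmLine

theorem card_filter_ne_zero_eq_one_of_forall_eq_zero_or_eq_sum {ι K : Type*} [Fintype ι]
    [Field K] [DecidableEq K] [CharZero K] {a : ι → K} (ha : a ≠ 0)
    (h : ∀ i, a i = 0 ∨ a i = ∑ j, a j) :
    #{i | a i ≠ 0} = 1 := by
  obtain ⟨p, hp⟩ := Function.ne_iff.mp ha
  have hS : ∑ j, a j ≠ 0 := (h p).resolve_left hp ▸ hp
  have hsum : (#{i | a i ≠ 0} : K) * ∑ j, a j = 1 * ∑ j, a j := by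
    calc (#{i | a i ≠ 0} : K) * ∑ j, a j = ∑ i with a i ≠ 0, ∑ j, a j := by
          rw [sum_const, nsmul_eq_mul]
      _ = ∑ i with a i ≠ 0, a i :=
          sum_congr rfl fun i hi => ((h i).resolve_left (mem_filter.mp hi).2).symm
      _ = 1 * ∑ j, a j := by rw [sum_filter_ne_zero, one_mul]
  exact_mod_cast mul_right_cancel₀ hS hsum

theorem Matrix.exists_eq_permMatrix_mul_diagonal {ι R : Type*} [Fintype ι]
    [DecidableEq ι] [CommRing R] [DecidableEq R] [Nontrivial R] {g : Matrix ι ι R} (hg : IsUnit g)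
    (h : ∀ j, #{i | g i j ≠ 0} = 1) :
    ∃ (σ : Equiv.Perm ι) (d : ι → R), (∀ i, d i ≠ 0) ∧ g = σ.permMatrix R * diagonal d := by
  choose f hf using fun j => card_eq_one.mp (h j)
  have hsupp : ∀ i j, g i j ≠ 0 ↔ i = f j := fun i j => by
    simpa using congrArg (i ∈ ·) (hf j)
  have hf_surj : Function.Surjective f := by
    intro i
    by_contra hi
    push Not at hi
    refine ((isUnit_iff_isUnit_det g).mp hg).ne_zero (det_eq_zero_of_row_eq_zero i fun j => ?_)
    simpa using mt (hsupp i j).mp (hi j).symm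
  let e := Equiv.ofBijective f hf_surj.bijective_of_finite
  refine ⟨e.symm, fun j => g (f j) j, fun j => (hsupp _ _).mpr rfl, ?_⟩
  ext i k
  rw [Equiv.Perm.permMatrix, PEquiv.toMatrix_toPEquiv_mul, submatrix_apply, id, diagonal_apply]
  split_ifs with hik
  · rw [← hik, Equiv.ofBijective_apply_symm_apply f]
  · by_contra hne
    exact hik ((e.symm_apply_eq).mpr ((hsupp i k).mp hne))

theorem esymmLine_mulVec {n r : ℕ} {g : Matrix (Fin n) (Fin n) ℂ}
    (hstab : ∀ x : Fin n → ℂ, esymm n r (g.mulVec x) = esymm n r x) (u w : Fin n → ℂ) :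
    esymmLine univ r (g *ᵥ u) (g *ᵥ w) = esymmLine univ r u w := by
  refine Polynomial.funext fun t => ?_
  have heval : ∀ u w : Fin n → ℂ, (esymmLine univ r u w).eval t = esymm n r (u + t • w) := by
    intro u w
    simp only [esymmLine, eval_finsetSum, eval_prod, eval_add, eval_mul, eval_C, eval_X, esymm,
      Pi.add_apply, Pi.smul_apply, smul_eq_mul]
    exact sum_congr rfl fun I _ => prod_congr rfl fun i _ => by ring
  rw [heval, heval, ← Matrix.mulVec_smul, ← Matrix.mulVec_add, hstab]

/-- Let `2 < r < n`. If `g ∈ GLₙ(ℂ)` satisfies `e_r(g·x) = e_r(x)` for all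
`x ∈ ℂⁿ`, then `g` is a monomial matrix: it is the product of a permutation matrix with an
invertible diagonal matrix, i.e. every column of `g` has exactly one nonzero entry. -/
theorem stabilizer_is_monomial (n r : ℕ) (hr : 2 < r) (hrn : r < n)
    (g : Matrix (Fin n) (Fin n) ℂ) (hg : IsUnit g)
    (hstab : ∀ x : Fin n → ℂ, esymm n r (g.mulVec x) = esymm n r x) :
    (∃ (σ : Equiv.Perm (Fin n)) (d : Fin n → ℂ), (∀ i, d i ≠ 0) ∧
        g = σ.permMatrix ℂ * Matrix.diagonal d) ∧
      (∀ j : Fin n, (Finset.univ.filter fun i => g i j ≠ 0).card = 1) := by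
  have hcol_ne : ∀ j, g.col j ≠ 0 := fun j hj =>
    ((Matrix.isUnit_iff_isUnit_det g).mp hg).ne_zero
      (Matrix.det_eq_zero_of_column_eq_zero j fun i => congrFun hj i)
  have hcol : ∀ j i, g i j = 0 ∨ g i j = ∑ k, g k j := fun j i => by
    refine eq_zero_or_eq_sum_of_forall_coeff_esymmLine_two_eq_zero (a := g.col j) hr
      (by simpa using hrn.le) (fun v => ?_) (mem_univ i)
    obtain ⟨y, rfl⟩ := Matrix.mulVec_surjective_iff_isUnit.mpr hg v
    rw [← Matrix.mulVec_single_one, esymmLine_mulVec hstab, coeff_esymmLine_single_two _ hr.le]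
  have hcard : ∀ j, #{i | g i j ≠ 0} = 1 := fun j =>
    card_filter_ne_zero_eq_one_of_forall_eq_zero_or_eq_sum (hcol_ne j) (hcol j)
  exact ⟨Matrix.exists_eq_permMatrix_mul_diagonal hg hcard, hcard⟩
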